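/- arXiv:1204.2306 — 2 statements merged into one kernel-verified Lean document; each statement's English description precedes it below -/
import Mathlib

section
/- Let v be a heavy vertex of a tree T that is the common center of exactly two vines, and let e be an edge incident to v that is not incident to any end of those vines. Then e is not used in some minimum path covering of T, and P(T) = P(T − e). -/
/-!
If a minimum path covering of `T` uses `e = vu`, then `v` is joined in it to at most one
further vertex, so it misses one of the two vine ends `b₁ ≠ b₂` next to `v`. Trading `vu` for
`vbᵢ` keeps every degree at most 2 (`bᵢ` is light) and keeps the number of paths, because in a
tree both edges join different components of the covering with `vu` removed. A minimum path
covering avoiding `e` is a path covering of `T − e`, so `P(T − e) ≤ P(T)`; the reverse inequality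
holds because deleting edges can only increase the path covering number.
The vine ends are distinct: a path of light vertices running to a leaf and avoiding a given
neighbour of its start has no choice at any step.
-/

namespace PaperPC

open SimpleGraph

variable {V : Type*}

/-- The degree of a vertex, via the cardinality of its neighbor set. -/
noncomputable def ndeg (G : SimpleGraph V) (v : V) : ℕ := (G.neighborSet v).ncard

/-- A linear forest: an acyclic graph of maximum degree at most 2,
i.e. a vertex-disjoint union of paths.  A spanning linear subforest of `G`
is exactly a path covering of `G` (isolated vertices are one-vertex paths). -/
def IsLinearForest (H : SimpleGraph V) : Prop :=
  H.IsAcyclic ∧ ∀ v, ndeg H v ≤ 2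

/-- The number of paths of a path covering = number of connected components. -/
noncomputable def numPaths (H : SimpleGraph V) : ℕ := Nat.card H.ConnectedComponent

/-- The path covering number `P(G)`. -/
noncomputable def pathCoverNumber (G : SimpleGraph V) : ℕ :=
  sInf {k | ∃ H ≤ G, IsLinearForest H ∧ numPaths H = k}

/-- `H` is a minimum path covering of `G`. -/
def IsMinPathCover (G H : SimpleGraph V) : Prop :=
  H ≤ G ∧ IsLinearForest H ∧ numPaths H = pathCoverNumber G

open scoped Classical in
/-- The path sequence of a path covering: the multiset of the numbers of vertices
of its paths (a multiset encodes the nondecreasing ordered sequence). -/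
noncomputable def pathSeq [Fintype V] (H : SimpleGraph V) : Multiset ℕ :=
  (Finset.univ : Finset H.ConnectedComponent).val.map fun c => c.supp.ncard

/-- `G` admits a unique path sequence. -/
def UniquePathSequence [Fintype V] (G : SimpleGraph V) : Prop :=
  ∀ H₁ H₂ : SimpleGraph V, IsMinPathCover G H₁ → IsMinPathCover G H₂ →
    pathSeq H₁ = pathSeq H₂

/-- Number of leaves (vertices of degree 1). -/
noncomputable def numLeaves (G : SimpleGraph V) : ℕ := {v | ndeg G v = 1}.ncard

/-- Number of heavy edges (edges both of whose endpoints have degree > 2). -/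
noncomputable def numHeavyEdges (G : SimpleGraph V) : ℕ :=
  {e ∈ G.edgeSet | ∀ v ∈ e, 2 < ndeg G v}.ncard

/-- Number of edges. -/
noncomputable def numEdges (G : SimpleGraph V) : ℕ := G.edgeSet.ncard

/-- A graph is 2-sparse if no two adjacent vertices both have degree > 2. -/
def TwoSparse (G : SimpleGraph V) : Prop :=
  ∀ u v, G.Adj u v → ndeg G u ≤ 2 ∨ ndeg G v ≤ 2

/-- `G` is a path graph. -/
def IsPathGraph (G : SimpleGraph V) : Prop := G.IsTree ∧ ∀ v, ndeg G v ≤ 2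

/-- `G` is a cycle graph. -/
def IsCycleGraph (G : SimpleGraph V) : Prop := G.Connected ∧ ∀ v, ndeg G v = 2

/-- A generalized star: a tree with exactly one heavy vertex (the center) in which
all vines have the same number of vertices (equivalently, all leaves are at the same
distance from the center). -/
def IsGenStar (G : SimpleGraph V) : Prop :=
  G.IsTree ∧ ∃ c k, 2 < ndeg G c ∧ (∀ v, v ≠ c → ndeg G v ≤ 2) ∧
    ∀ v, ndeg G v = 1 → G.dist c v = k

/-- An L(2,1)-labeling. -/
def IsL21Labeling (G : SimpleGraph V) (f : V → ℕ) : Prop :=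
  (∀ u v, G.Adj u v → 2 ≤ Nat.dist (f u) (f v)) ∧
  (∀ u v, G.dist u v = 2 → 1 ≤ Nat.dist (f u) (f v))

/-- `λ(G)`: the least `k` such that `G` has an L(2,1)-labeling with labels in `{0,…,k}`. -/
noncomputable def lambdaNum (G : SimpleGraph V) : ℕ :=
  sInf {k | ∃ f : V → ℕ, IsL21Labeling G f ∧ ∀ v, f v ≤ k}

/-- A λ-labeling: an L(2,1)-labeling with maximum label `λ(G)`. -/
def IsLambdaLabeling (G : SimpleGraph V) (f : V → ℕ) : Prop :=
  IsL21Labeling G f ∧ (∀ v, f v ≤ lambdaNum G) ∧ ∃ v, f v = lambdaNum G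

/-- The set of holes of a labeling: unused labels `h` with `1 ≤ h ≤ λ(G) - 1`. -/
def labHoles (G : SimpleGraph V) (f : V → ℕ) : Set ℕ :=
  {h | 1 ≤ h ∧ h + 1 ≤ lambdaNum G ∧ ∀ v, f v ≠ h}

/-- The hole index `ρ(G)`: minimum number of holes over all λ-labelings. -/
noncomputable def holeIndex (G : SimpleGraph V) : ℕ :=
  sInf {k | ∃ f : V → ℕ, IsLambdaLabeling G f ∧ (labHoles G f).ncard = k}

open scoped Classical in
/-- The island sequence of a labeling: the multiset of cardinalities of the maximal
intervals `[a,b]` of consecutive integers all used by the labeling. -/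
noncomputable def islandSeq [Fintype V] (G : SimpleGraph V) (f : V → ℕ) : Multiset ℕ :=
  (((Finset.range (lambdaNum G + 1)) ×ˢ (Finset.range (lambdaNum G + 1))).filter
    (fun q => q.1 ≤ q.2 ∧ (∀ x ∈ Finset.Icc q.1 q.2, ∃ v, f v = x) ∧
      (q.1 = 0 ∨ ∀ v, f v ≠ q.1 - 1) ∧ ∀ v, f v ≠ q.2 + 1)).val.map
    fun q => q.2 - q.1 + 1

/-- `G` admits (at least) two distinct island sequences. -/
def MultipleIslandSequences [Fintype V] (G : SimpleGraph V) : Prop :=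
  ∃ f g : V → ℕ, IsLambdaLabeling G f ∧ IsLambdaLabeling G g ∧
    (labHoles G f).ncard = holeIndex G ∧ (labHoles G g).ncard = holeIndex G ∧
    islandSeq G f ≠ islandSeq G g

/-- A vine: a maximal path one of whose endpoints (`a`) is a leaf and all of whose
vertices are light.  Maximality: any light vertex adjacent to the other end already
lies on the path. -/
def IsVine (G : SimpleGraph V) {a b : V} (p : G.Walk a b) : Prop :=
  p.IsPath ∧ ndeg G a = 1 ∧ (∀ v ∈ p.support, ndeg G v ≤ 2) ∧
  ∀ c, G.Adj b c → ndeg G c ≤ 2 → c ∈ p.support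

/-- A vine with center `v`: the (heavy) vertex adjacent to the non-leaf end of the vine. -/
def IsVineWithCenter (G : SimpleGraph V) {a b : V} (p : G.Walk a b) (v : V) : Prop :=
  IsVine G p ∧ G.Adj b v ∧ 2 < ndeg G v

/-- The matching number of the subgraph of `G` induced by `S`. -/
noncomputable def matchingNumberOn (G : SimpleGraph V) (S : Set V) : ℕ :=
  sSup {k | ∃ M : Set (Sym2 V), M ⊆ G.edgeSet ∧ (∀ e ∈ M, ∀ v ∈ e, v ∈ S) ∧
    (∀ e ∈ M, ∀ f ∈ M, e ≠ f → ∀ v, v ∈ e → v ∉ f) ∧ M.ncard = k}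

/-- Labels used in the family `F`: `A`, or `B k` where `k` records the number of
vertices of each vine of the labeled generalized star that produced the label. -/
inductive Lab | A | B (k : ℕ)

/-- A labeled generalized star with center `c` whose vines have `k` vertices each
(equivalently, every leaf is at distance `k` from `c`); the degenerate case
`deg c = 2` is the convention regarding a path of length `2k` as a labeled
generalized star with two vines.  The neighbors of the center are labeled `B k`,
the other non-leaf vertices (and the center) are labeled `A`, leaves are unlabeled. -/
def IsLGenStar {W : Type*} (H : SimpleGraph W) (c : W) (k : ℕ)
    (lab : W → Option Lab) : Prop :=
  H.IsTree ∧ 2 ≤ ndeg H c ∧ (∀ v, v ≠ c → ndeg H v ≤ 2) ∧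
  (∀ v, ndeg H v = 1 → H.dist c v = k) ∧
  lab c = some Lab.A ∧
  (∀ v, H.Adj c v → lab v = some (Lab.B k)) ∧
  (∀ v, v ≠ c → ¬H.Adj c v → ndeg H v = 1 → lab v = none) ∧
  (∀ v, v ≠ c → ¬H.Adj c v → 2 ≤ ndeg H v → lab v = some Lab.A)

/-- A labeled path: a path with at least three vertices, non-leaf vertices labeled `A`. -/
def IsLPath {W : Type*} (H : SimpleGraph W) (lab : W → Option Lab) : Prop :=
  H.IsTree ∧ (∀ v, ndeg H v ≤ 2) ∧ 3 ≤ Nat.card W ∧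
  (∀ v, ndeg H v = 1 → lab v = none) ∧
  ∀ v, 2 ≤ ndeg H v → lab v = some Lab.A

/-- The induced subgraph of `T` on `s` is a labeled generalized star. -/
def LGenStarOn (T : SimpleGraph V) (s : Set V) (c : V) (k : ℕ)
    (lab : V → Option Lab) : Prop :=
  ∃ hc : c ∈ s, IsLGenStar (T.induce s) ⟨c, hc⟩ k fun v => lab v.1

/-- The induced subgraph of `T` on `s` is a labeled path. -/
def LPathOn (T : SimpleGraph V) (s : Set V) (lab : V → Option Lab) : Prop :=
  IsLPath (T.induce s) fun v => lab v.1

/-- The family `F` of labeled trees, realized as induced subgraphs (on vertex sets `s`)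
of an ambient graph `T`:  start from a labeled generalized star with at least three
vines or from a labeled path, and repeatedly attach, via a single new edge, a labeled
generalized star with at least three vines at a vertex labeled `A` (Type-1), a labeled
path by one of its non-leaf vertices at a vertex labeled `A` (Type-2), or a labeled
generalized star whose vines have the same number of vertices `k` as those of the star
that labeled `u` with `B k`, at a vertex `u` labeled `B k` (Type-3). -/
inductive InF (T : SimpleGraph V) : Set V → (V → Option Lab) → Prop
  | base_star (s : Set V) (c : V) (k : ℕ) (lab : V → Option Lab) :
      LGenStarOn T s c k lab → 3 ≤ {w ∈ s | T.Adj c w}.ncard → InF T s lab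
  | base_path (s : Set V) (lab : V → Option Lab) :
      LPathOn T s lab → InF T s lab
  | type1 (s : Set V) (lab : V → Option Lab) (t : Set V) (lab' : V → Option Lab)
      (u c : V) (k : ℕ) :
      InF T s lab → Disjoint s t → u ∈ s → c ∈ t → lab u = some Lab.A →
      LGenStarOn T t c k lab' → 3 ≤ {w ∈ t | T.Adj c w}.ncard →
      (∀ x ∈ s, ∀ y ∈ t, (T.Adj x y ↔ x = u ∧ y = c)) →
      (∀ x ∈ s, lab' x = lab x) →
      InF T (s ∪ t) lab'
  | type2 (s : Set V) (lab : V → Option Lab) (t : Set V) (lab' : V → Option Lab)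
      (u v : V) :
      InF T s lab → Disjoint s t → u ∈ s → v ∈ t → lab u = some Lab.A →
      LPathOn T t lab' → 2 ≤ {w ∈ t | T.Adj v w}.ncard →
      (∀ x ∈ s, ∀ y ∈ t, (T.Adj x y ↔ x = u ∧ y = v)) →
      (∀ x ∈ s, lab' x = lab x) →
      InF T (s ∪ t) lab'
  | type3 (s : Set V) (lab : V → Option Lab) (t : Set V) (lab' : V → Option Lab)
      (u c : V) (k : ℕ) :
      InF T s lab → Disjoint s t → u ∈ s → c ∈ t → lab u = some (Lab.B k) →
      LGenStarOn T t c k lab' →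
      (∀ x ∈ s, ∀ y ∈ t, (T.Adj x y ↔ x = u ∧ y = c)) →
      (∀ x ∈ s, lab' x = lab x) →
      InF T (s ∪ t) lab'

/-- `G` is obtained from the tree `T` by expanding each edge of `T` into a complete
graph of arbitrary order: there is an embedding `ι` of the vertices of `T` and an
assignment `b` of a block of vertices of `G` to each edge of `T` such that an original
vertex lies in the block of an edge iff it is an endpoint of that edge, blocks of
distinct edges meet only in original vertices, every vertex of `G` lies in some block,
and two distinct vertices of `G` are adjacent iff they lie in a common block. -/
def IsBlockExpansion {U W : Type*} (T : SimpleGraph U) (G : SimpleGraph W) : Prop :=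
  ∃ (ι : U ↪ W) (b : Sym2 U → Set W),
    (∀ (u : U), ∀ e ∈ T.edgeSet, (ι u ∈ b e ↔ u ∈ e)) ∧
    (∀ e ∈ T.edgeSet, ∀ f ∈ T.edgeSet, e ≠ f → b e ∩ b f ⊆ Set.range ι) ∧
    (∀ w : W, ∃ e ∈ T.edgeSet, w ∈ b e) ∧
    (∀ x y : W, G.Adj x y ↔ x ≠ y ∧ ∃ e ∈ T.edgeSet, x ∈ b e ∧ y ∈ b e)

theorem card_subtype_ne_add_one {α : Type*} [Finite α] (a : α) :
    Nat.card {x // x ≠ a} + 1 = Nat.card α := by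
  classical
  rw [← Nat.card_congr (Equiv.sumCompl (· = a)), Nat.card_sum,
    Nat.card_unique (α := {x // x = a}), add_comm]

theorem reachable_sup_edge {G : SimpleGraph V} {x y u w : V} (h : (G ⊔ edge x y).Reachable u w) :
    G.Reachable u w ∨ (G.Reachable u x ∧ G.Reachable y w) ∨
      (G.Reachable u y ∧ G.Reachable x w) := by
  obtain ⟨p⟩ := h
  induction p with
  | nil => exact .inl .rfl
  | @cons a b c hab _ ih =>
    rcases hab with hab | hab
    · exact ih.imp (hab.reachable.trans ·) (Or.imp (And.imp_left (hab.reachable.trans ·))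
        (And.imp_left (hab.reachable.trans ·)))
    · obtain ⟨⟨rfl, rfl⟩ | ⟨rfl, rfl⟩, -⟩ := (edge_adj ..).mp hab
      · rcases ih with h | ⟨h₁, h₂⟩ | ⟨-, h₂⟩
        exacts [.inr (.inl ⟨.rfl, h⟩), .inl (h₁.symm.trans h₂), .inl h₂]
      · rcases ih with h | ⟨-, h₂⟩ | ⟨h₁, h₂⟩
        exacts [.inr (.inr ⟨.rfl, h⟩), .inl h₂, .inl (h₁.symm.trans h₂)]

theorem card_connectedComponent_sup_edge [Finite V] {G : SimpleGraph V} {x y : V}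
    (hxy : ¬G.Reachable x y) :
    Nat.card (G ⊔ edge x y).ConnectedComponent + 1 = Nat.card G.ConnectedComponent := by
  have hadj : (G ⊔ edge x y).Adj x y :=
    .inr ((edge_adj ..).mpr ⟨.inl ⟨rfl, rfl⟩, fun h => hxy (h ▸ .rfl)⟩)
  let f : {C : G.ConnectedComponent // C ≠ G.connectedComponentMk y} →
      (G ⊔ edge x y).ConnectedComponent := fun C => C.1.map (Hom.ofLE le_sup_left)
  have hf : f.Bijective := by
    refine ⟨fun ⟨C₁, h₁⟩ ⟨C₂, h₂⟩ h => ?_, fun D => ?_⟩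
    · induction C₁ using ConnectedComponent.ind with | h u₁ => ?_
      induction C₂ using ConnectedComponent.ind with | h u₂ => ?_
      rcases reachable_sup_edge (ConnectedComponent.exact h) with h | ⟨-, h⟩ | ⟨h, -⟩
      · exact Subtype.ext (ConnectedComponent.sound h)
      · exact (h₂ (ConnectedComponent.sound h.symm)).elim
      · exact (h₁ (ConnectedComponent.sound h)).elim
    · induction D using ConnectedComponent.ind with | h w => ?_
      by_cases hw : G.Reachable w y
      · refine ⟨⟨G.connectedComponentMk x, fun h => hxy (ConnectedComponent.exact h)⟩, ?_⟩
        exact ConnectedComponent.sound (hadj.reachable.trans (hw.symm.mono le_sup_left))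
      · exact ⟨⟨G.connectedComponentMk w, fun h => hw (ConnectedComponent.exact h)⟩, rfl⟩
  rw [← Nat.card_congr (Equiv.ofBijective f hf)]
  exact card_subtype_ne_add_one _

theorem le_deleteEdges_singleton {G H : SimpleGraph V} {e : Sym2 V} (hHG : H ≤ G)
    (he : e ∉ H.edgeSet) : H ≤ G.deleteEdges {e} :=
  deleteEdges_eq_self.mpr (Set.disjoint_singleton_right.mpr he) ▸ deleteEdges_mono hHG

theorem not_reachable_of_le_of_not_adj {T H : SimpleGraph V} (hT : T.IsAcyclic) (hHT : H ≤ T)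
    {x y : V} (hxy : T.Adj x y) (hH : ¬H.Adj x y) : ¬H.Reachable x y :=
  fun h => isAcyclic_iff_forall_adj_isBridge.mp hT hxy (h.mono (le_deleteEdges_singleton hHT hH))

theorem two_lt_ndeg_of_three_adj [Finite V] {G : SimpleGraph V} {v x y z : V} (hx : G.Adj v x)
    (hy : G.Adj v y) (hz : G.Adj v z) (hxy : x ≠ y) (hxz : x ≠ z) (hyz : y ≠ z) :
    2 < ndeg G v :=
  (Set.two_lt_ncard_iff).mpr ⟨x, y, z, hx, hy, hz, hxy, hxz, hyz⟩

theorem one_lt_ndeg_of_two_adj [Finite V] {G : SimpleGraph V} {v x y : V} (hx : G.Adj v x)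
    (hy : G.Adj v y) (hxy : x ≠ y) : 1 < ndeg G v :=
  (Set.one_lt_ncard_iff).mpr ⟨x, y, hx, hy, hxy⟩

theorem ndeg_sdiff_edge_sup_edge_le [Finite V] {H : SimpleGraph V} {v u b x : V}
    (hvu : H.Adj v u) (hxb : x ≠ b) : ndeg (H \ edge v u ⊔ edge v b) x ≤ ndeg H x := by
  by_cases hxv : x = v
  · subst hxv
    have hsub : (H \ edge x u ⊔ edge x b).neighborSet x ⊆ insert b (H.neighborSet x \ {u}) := by
      rintro z (⟨hz, hzu⟩ | hz)
      · exact .inr ⟨hz, fun h => hzu ((edge_adj ..).mpr ⟨.inl ⟨rfl, h⟩, hz.ne⟩)⟩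
      · obtain ⟨⟨-, rfl⟩ | ⟨rfl, -⟩, -⟩ := (edge_adj ..).mp hz
        exacts [.inl rfl, (hxb rfl).elim]
    calc ndeg (H \ edge x u ⊔ edge x b) x ≤ (insert b (H.neighborSet x \ {u})).ncard :=
          Set.ncard_le_ncard hsub
      _ ≤ (H.neighborSet x \ {u}).ncard + 1 := Set.ncard_insert_le _ _
      _ = ndeg H x := Set.ncard_sdiff_singleton_add_one hvu
  · refine Set.ncard_le_ncard ?_
    rintro z (⟨hz, -⟩ | hz)
    · exact hz
    · obtain ⟨⟨rfl, -⟩ | ⟨rfl, -⟩, -⟩ := (edge_adj ..).mp hz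
      exacts [(hxv rfl).elim, (hxb rfl).elim]

section EdgeSwap

variable {T H : SimpleGraph V} {v u b : V}

theorem sdiff_edge_sup_edge_le (hHT : H ≤ T) (hvb : T.Adj v b) : H \ edge v u ⊔ edge v b ≤ T :=
  sup_le (sdiff_le.trans hHT) ((edge_le_iff T).mpr (.inr hvb))

theorem isLinearForest_sdiff_edge_sup_edge [Finite V] (hT : T.IsAcyclic) (hHT : H ≤ T)
    (hH : IsLinearForest H) (hvu : H.Adj v u) (hvb : T.Adj v b) (hb : ndeg T b ≤ 2) :
    IsLinearForest (H \ edge v u ⊔ edge v b) := by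
  refine ⟨hT.anti (sdiff_edge_sup_edge_le hHT hvb), fun x => ?_⟩
  rcases eq_or_ne x b with rfl | hxb
  · exact (Set.ncard_le_ncard fun _ h => sdiff_edge_sup_edge_le hHT hvb h).trans hb
  · exact (ndeg_sdiff_edge_sup_edge_le hvu hxb).trans (hH.2 x)

theorem numPaths_sdiff_edge_sup_edge [Finite V] (hT : T.IsAcyclic) (hHT : H ≤ T)
    (hvu : H.Adj v u) (hvb : T.Adj v b) (hvbH : ¬H.Adj v b) :
    numPaths (H \ edge v u ⊔ edge v b) = numPaths H := by
  have hH₀T : H \ edge v u ≤ T := sdiff_le.trans hHT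
  have hvu₀ : ¬(H \ edge v u).Reachable v u := not_reachable_of_le_of_not_adj hT hH₀T
    (hHT hvu) fun h => ((sdiff_adj ..).mp h).2 ((edge_adj ..).mpr ⟨.inl ⟨rfl, rfl⟩, hvu.ne⟩)
  have hvb₀ : ¬(H \ edge v u).Reachable v b :=
    not_reachable_of_le_of_not_adj hT hH₀T hvb fun h => hvbH ((sdiff_adj ..).mp h).1
  have hrestore : H \ edge v u ⊔ edge v u = H :=
    sdiff_sup_cancel ((edge_le_iff H).mpr (.inr hvu))
  have h₁ := card_connectedComponent_sup_edge hvu₀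
  have h₂ := card_connectedComponent_sup_edge hvb₀
  rw [hrestore] at h₁
  unfold numPaths
  omega

end EdgeSwap

theorem isLinearForest_bot : IsLinearForest (⊥ : SimpleGraph V) :=
  ⟨isAcyclic_bot, fun v => by simp [ndeg]⟩

theorem exists_isMinPathCover (G : SimpleGraph V) : ∃ H, IsMinPathCover G H := by
  obtain ⟨H, hHG, hH, hnum⟩ :=
    Nat.sInf_mem (s := {k | ∃ H ≤ G, IsLinearForest H ∧ numPaths H = k})
      ⟨_, ⊥, bot_le, isLinearForest_bot, rfl⟩
  exact ⟨H, hHG, hH, hnum⟩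

theorem pathCoverNumber_le {G H : SimpleGraph V} (hHG : H ≤ G) (hH : IsLinearForest H) :
    pathCoverNumber G ≤ numPaths H :=
  Nat.sInf_le ⟨H, hHG, hH, rfl⟩

theorem pathCoverNumber_eq_of_isMinPathCover_le {G G' H : SimpleGraph V}
    (hH : IsMinPathCover G H) (hHG' : H ≤ G') (hG'G : G' ≤ G) :
    pathCoverNumber G = pathCoverNumber G' := by
  obtain ⟨H', hH'G', hH', hnum'⟩ := exists_isMinPathCover G'
  exact le_antisymm (hnum' ▸ pathCoverNumber_le (hH'G'.trans hG'G) hH')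
    (hH.2.2 ▸ pathCoverNumber_le hHG' hH.2.1)

theorem exists_isMinPathCover_not_adj [Finite V] {T : SimpleGraph V} (hT : T.IsAcyclic)
    {v u b₁ b₂ : V} (hvu : T.Adj v u) (hvb₁ : T.Adj v b₁) (hvb₂ : T.Adj v b₂) (hub₁ : u ≠ b₁)
    (hub₂ : u ≠ b₂) (hb₁b₂ : b₁ ≠ b₂) (hb₁ : ndeg T b₁ ≤ 2) (hb₂ : ndeg T b₂ ≤ 2) :
    ∃ H, IsMinPathCover T H ∧ ¬H.Adj v u := by
  obtain ⟨H, hHT, hH, hnum⟩ := exists_isMinPathCover T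
  refine (em (H.Adj v u)).elim (fun hvuH => ?_) fun hvuH => ⟨H, ⟨hHT, hH, hnum⟩, hvuH⟩
  have swap_with : ∀ b, T.Adj v b → ndeg T b ≤ 2 → ¬H.Adj v b →
      ∃ H', IsMinPathCover T H' ∧ ¬H'.Adj v u := fun b hvb hb hvbH =>
    ⟨H \ edge v u ⊔ edge v b,
      ⟨sdiff_edge_sup_edge_le hHT hvb, isLinearForest_sdiff_edge_sup_edge hT hHT hH hvuH hvb hb,
        (numPaths_sdiff_edge_sup_edge hT hHT hvuH hvb hvbH).trans hnum⟩, by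
      rintro (⟨-, h⟩ | h)
      · exact h ((edge_adj ..).mpr ⟨.inl ⟨rfl, rfl⟩, hvu.ne⟩)
      · obtain ⟨⟨-, rfl⟩ | ⟨rfl, rfl⟩, hne⟩ := (edge_adj ..).mp h
        exacts [hvbH hvuH, hne rfl]⟩
  by_cases hvb₁H : H.Adj v b₁
  · refine swap_with b₂ hvb₂ hb₂ fun hvb₂H => ?_
    exact absurd (hH.2 v) (two_lt_ndeg_of_three_adj hvuH hvb₁H hvb₂H hub₁ hub₂ hb₁b₂).not_ge
  · exact swap_with b₁ hvb₁ hb₁ hvb₁H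

theorem eq_of_light_paths_to_leaves [Finite V] {G : SimpleGraph V} {b a₁ a₂ w : V}
    (p₁ : G.Walk b a₁) (p₂ : G.Walk b a₂) (hp₁ : p₁.IsPath) (hp₂ : p₂.IsPath)
    (hl₁ : ∀ x ∈ p₁.support, ndeg G x ≤ 2) (hl₂ : ∀ x ∈ p₂.support, ndeg G x ≤ 2)
    (ha₁ : ndeg G a₁ = 1) (ha₂ : ndeg G a₂ = 1) (hbw : G.Adj b w)
    (hw₁ : w ∉ p₁.support) (hw₂ : w ∉ p₂.support) : a₁ = a₂ := by
  induction p₁ generalizing w with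
  | nil =>
    cases p₂ with
    | nil => rfl
    | cons hby q =>
      refine absurd ha₁ (one_lt_ndeg_of_two_adj hbw hby fun h => hw₂ ?_).ne'
      exact h ▸ q.start_mem_support.tail _
  | @cons b x a₁ hbx q₁ ih =>
    cases p₂ with
    | nil =>
      refine absurd ha₂ (one_lt_ndeg_of_two_adj hbw hbx fun h => hw₁ ?_).ne'
      exact h ▸ q₁.start_mem_support.tail _
    | @cons _ y _ hby q₂ =>
      have hxy : x = y := by
        by_contra hxy
        refine (two_lt_ndeg_of_three_adj hbw hbx hby
          (fun h => hw₁ (h ▸ q₁.start_mem_support.tail _))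
          (fun h => hw₂ (h ▸ q₂.start_mem_support.tail _)) hxy).not_ge ?_
        exact hl₁ b (Walk.start_mem_support _)
      subst hxy
      rw [Walk.cons_isPath_iff] at hp₁ hp₂
      exact ih q₂ hp₁.1 hp₂.1 (fun z hz => hl₁ z (hz.tail _)) (fun z hz => hl₂ z (hz.tail _))
        ha₁ hbx.symm hp₁.2 hp₂.2

theorem IsVineWithCenter.eq_of_isVine [Finite V] {G : SimpleGraph V} {a₁ a₂ b v : V}
    {p₁ : G.Walk a₁ b} {p₂ : G.Walk a₂ b} (h₁ : IsVineWithCenter G p₁ v) (h₂ : IsVine G p₂) :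
    a₁ = a₂ := by
  have hl₁ : ∀ x ∈ p₁.reverse.support, ndeg G x ≤ 2 :=
    fun x hx => h₁.1.2.2.1 x (by simpa using hx)
  have hl₂ : ∀ x ∈ p₂.reverse.support, ndeg G x ≤ 2 :=
    fun x hx => h₂.2.2.1 x (by simpa using hx)
  have hv : 2 < ndeg G v := h₁.2.2
  exact eq_of_light_paths_to_leaves p₁.reverse p₂.reverse h₁.1.1.reverse h₂.1.reverse hl₁ hl₂
    h₁.1.2.1 h₂.2.1 h₁.2.1 (fun h => (hl₁ v h).not_gt hv) (fun h => (hl₂ v h).not_gt hv)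

theorem center_two_vines_delete_edge_general {V : Type*} [Fintype V] (T : SimpleGraph V)
    (hT : T.IsTree) {v a₁ b₁ a₂ b₂ : V}
    (p₁ : T.Walk a₁ b₁) (p₂ : T.Walk a₂ b₂)
    (h₁ : IsVineWithCenter T p₁ v) (h₂ : IsVineWithCenter T p₂ v) (hne : a₁ ≠ a₂)
    (e : Sym2 V) (he : e ∈ T.edgeSet) (hv : v ∈ e)
    (hend : ∀ w ∈ e, ∀ (a b : V) (p : T.Walk a b), IsVine T p → w ≠ a ∧ w ≠ b) :
    (∃ H, IsMinPathCover T H ∧ e ∉ H.edgeSet) ∧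
      pathCoverNumber T = pathCoverNumber (T.deleteEdges {e}) := by
  obtain ⟨u, rfl⟩ : ∃ u, e = s(v, u) := ⟨Sym2.Mem.other hv, (Sym2.other_spec hv).symm⟩
  have hub₁ : u ≠ b₁ := (hend u (Sym2.mem_mk_right v u) _ _ p₁ h₁.1).2
  have hub₂ : u ≠ b₂ := (hend u (Sym2.mem_mk_right v u) _ _ p₂ h₂.1).2
  have hb₁b₂ : b₁ ≠ b₂ := by
    rintro rfl
    exact hne (h₁.eq_of_isVine h₂.1)
  obtain ⟨H, hH, hvuH⟩ := exists_isMinPathCover_not_adj hT.isAcyclic he h₁.2.1.symm h₂.2.1.symm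
    hub₁ hub₂ hb₁b₂ (h₁.1.2.2.1 _ p₁.end_mem_support) (h₂.1.2.2.1 _ p₂.end_mem_support)
  exact ⟨⟨H, hH, hvuH⟩, pathCoverNumber_eq_of_isMinPathCover_le hH
    (le_deleteEdges_singleton hH.1 hvuH) (deleteEdges_le _)⟩

/-- **Lemma (Statement 12).** Let `v` be a heavy vertex of a tree `T` which is the
common center of exactly two vines, and let `e` be an edge incident to `v` that is not
incident to any end of vines.  Then `e` is unused in some minimum path covering of `T`,
and `P(T) = P(T − e)`. -/
theorem center_two_vines_delete_edge {V : Type*} [Fintype V] (T : SimpleGraph V)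
    (hT : T.IsTree) {v a₁ b₁ a₂ b₂ : V}
    (p₁ : T.Walk a₁ b₁) (p₂ : T.Walk a₂ b₂)
    (h₁ : IsVineWithCenter T p₁ v) (h₂ : IsVineWithCenter T p₂ v) (hne : a₁ ≠ a₂)
    (honly : ∀ (a b : V) (p : T.Walk a b), IsVineWithCenter T p v → a = a₁ ∨ a = a₂)
    (e : Sym2 V) (he : e ∈ T.edgeSet) (hv : v ∈ e)
    (hend : ∀ w ∈ e, ∀ (a b : V) (p : T.Walk a b), IsVine T p → w ≠ a ∧ w ≠ b) :
    (∃ H, IsMinPathCover T H ∧ e ∉ H.edgeSet) ∧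
      pathCoverNumber T = pathCoverNumber (T.deleteEdges {e}) :=
  center_two_vines_delete_edge_general T hT p₁ p₂ h₁ h₂ hne e he hv hend

end PaperPC
end

section
/- Let G be a connected 2-sparse graph with m ≥ 1 edges, n vertices, and ℓ leaves. If G is not a cycle, then P(G) = ℓ + m − n. -/
namespace PaperPC

open SimpleGraph

variable {V : Type*}

/-!
A vertex is heavy if its degree exceeds 2. Let `σ(G) = ∑ v, (deg v - 2)`, with truncated
subtraction, so that only heavy vertices contribute; if `G` has no isolated vertex, the handshake
lemma gives `σ(G) + 2n = 2m + ℓ`.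

A linear forest `H ≤ G` has `n - |E(H)|` paths and keeps at most two edges at each heavy vertex.
The edges dropped at distinct heavy vertices are distinct because heavy vertices of a 2-sparse
graph are pairwise non-adjacent, so `σ(G) + |E(H)| ≤ m` and `H` has at least `ℓ + m - n` paths.

Conversely, if `G` is a tree, deleting `deg v - 2` edges at each heavy vertex `v` leaves a linear
forest with exactly `ℓ + m - n` paths. Otherwise some cycle of `G` passes through a heavy vertex
`w`, since a cycle of light vertices in a connected graph is the whole graph. Deleting a cycle edge
`wx` keeps `G` connected, 2-sparse and not a cycle (now `deg x ≤ 1`), removes one edge and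
creates at most one leaf, so induction on `m` applies.
-/

section Degrees

variable {G H : SimpleGraph V}

theorem ndeg_eq_degree [Fintype V] (G : SimpleGraph V) [DecidableRel G.Adj] (v : V) :
    ndeg G v = G.degree v := by
  rw [ndeg, ← card_neighborFinset_eq_degree, neighborFinset_def, Set.ncard_eq_toFinset_card']

theorem numEdges_eq_card_edgeFinset [Fintype V] (G : SimpleGraph V) [DecidableRel G.Adj] :
    numEdges G = G.edgeFinset.card := by
  rw [numEdges, Set.ncard_eq_toFinset_card', edgeFinset]

theorem ndeg_mono [Finite V] (hle : H ≤ G) (v : V) : ndeg H v ≤ ndeg G v :=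
  Set.ncard_le_ncard (fun _ h => hle h) (Set.toFinite _)

theorem TwoSparse.anti [Finite V] (hle : H ≤ G) (hG : TwoSparse G) : TwoSparse H := fun u v huv =>
  (hG u v (hle huv)).imp (ndeg_mono hle u).trans (ndeg_mono hle v).trans

theorem one_le_ndeg_of_connected [Finite V] [Nontrivial V] (hG : G.Connected) (v : V) :
    1 ≤ ndeg G v := by
  classical
  have := Fintype.ofFinite V
  rw [ndeg_eq_degree]
  exact hG.preconnected.degree_pos_of_nontrivial v

theorem sum_ndeg_sub_two_add_two_mul_card [Fintype V] (hdeg : ∀ v, 1 ≤ ndeg G v) :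
    ∑ v, (ndeg G v - 2) + 2 * Fintype.card V = 2 * numEdges G + numLeaves G := by
  classical
  have hleaves : numLeaves G = ∑ v, if ndeg G v = 1 then 1 else 0 := by
    rw [Finset.sum_boole, numLeaves, ← Set.ncard_coe_finset, Finset.coe_filter]
    simp
  have hedges : 2 * numEdges G = ∑ v, ndeg G v := by
    simp only [numEdges_eq_card_edgeFinset, ndeg_eq_degree, sum_degrees_eq_twice_card_edges]
  have hcard : 2 * Fintype.card V = ∑ _v : V, 2 := by simp [mul_comm]
  rw [hleaves, hedges, hcard, ← Finset.sum_add_distrib, ← Finset.sum_add_distrib]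
  refine Finset.sum_congr rfl fun v _ => ?_
  have := hdeg v
  split_ifs <;> omega

theorem nontrivial_of_one_le_numEdges (hG : 1 ≤ numEdges G) : Nontrivial V := by
  obtain ⟨e, he⟩ : G.edgeSet.Nonempty :=
    Set.nonempty_of_ncard_ne_zero (by rw [numEdges] at hG; omega)
  induction e using Sym2.ind with
  | _ u v => exact nontrivial_of_ne u v (G.ne_of_adj he)

end Degrees

section Forest

variable {G : SimpleGraph V}

theorem _root_.SimpleGraph.IsAcyclic.card_connectedComponent_add_card_edgeSet [Finite V]
    (hG : G.IsAcyclic) :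
    Nat.card G.ConnectedComponent + Nat.card G.edgeSet = Nat.card V := by
  have := Fintype.ofFinite G.ConnectedComponent
  let f : (Σ c : G.ConnectedComponent, c.toSimpleGraph.edgeSet) → G.edgeSet :=
    fun e => (Embedding.induce e.1.supp).mapEdgeSet e.2
  have hf : Function.Bijective f := by
    constructor
    · have hsupp (c : G.ConnectedComponent) (e : c.toSimpleGraph.edgeSet) (v : V)
          (hv : v ∈ (f ⟨c, e⟩ : Sym2 V)) : G.connectedComponentMk v = c := by
        obtain ⟨a, -, rfl⟩ := Sym2.mem_map.mp hv
        exact a.2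
      rintro ⟨c, e⟩ ⟨c', e'⟩ h
      have hv := (f ⟨c, e⟩ : Sym2 V).out_fst_mem
      obtain rfl : c = c' := (hsupp c e _ hv).symm.trans (hsupp c' e' _ (h ▸ hv))
      exact congrArg (Sigma.mk c) ((Embedding.induce c.supp).mapEdgeSet.injective h)
    · rintro ⟨e, he⟩
      induction e using Sym2.ind with
      | _ x y =>
        refine ⟨⟨G.connectedComponentMk x, ⟨s(⟨x, rfl⟩, ⟨y, ?_⟩), he⟩⟩, rfl⟩
        exact (ConnectedComponent.connectedComponentMk_eq_of_adj he).symm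
  have hV : Nat.card V = ∑ c : G.ConnectedComponent, Nat.card c.supp := by
    rw [← Nat.card_sigma]
    exact Nat.card_congr (Equiv.sigmaFiberEquiv G.connectedComponentMk).symm
  have hE :
      Nat.card G.edgeSet = ∑ c : G.ConnectedComponent, Nat.card c.toSimpleGraph.edgeSet := by
    rw [← Nat.card_sigma]
    exact (Nat.card_eq_of_bijective f hf).symm
  have hcomp (c : G.ConnectedComponent) :
      Nat.card c.toSimpleGraph.edgeSet + 1 = Nat.card c.supp :=
    (isTree_iff_connected_and_card.mp (hG.isTree_connectedComponent c)).2
  simp only [hV, hE, ← hcomp, Finset.sum_add_distrib, Finset.sum_const, Finset.card_univ,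
    smul_eq_mul, mul_one, Nat.card_eq_fintype_card]
  ring

theorem numPaths_add_numEdges_of_isAcyclic [Fintype V] (hG : G.IsAcyclic) :
    numPaths G + numEdges G = Fintype.card V := by
  rw [numPaths, numEdges, ← Nat.card_coe_set_eq, ← Nat.card_eq_fintype_card]
  exact hG.card_connectedComponent_add_card_edgeSet

end Forest

section Trimming

variable {G H : SimpleGraph V}

theorem TwoSparse.sum_ndeg_sub_two_add_numEdges_le [Fintype V] (hG : TwoSparse G) (hle : H ≤ G)
    (hH : ∀ v, ndeg H v ≤ 2) : ∑ v, (ndeg G v - 2) + numEdges H ≤ numEdges G := by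
  classical
  let S := Finset.univ.filter fun v => 2 < ndeg G v
  let I v := G.incidenceFinset v \ H.incidenceFinset v
  have hsub v : H.incidenceFinset v ⊆ G.incidenceFinset v := fun e he => by
    rw [mem_incidenceFinset] at he ⊢
    exact ⟨edgeSet_mono hle he.1, he.2⟩
  have hI v : ndeg G v - 2 ≤ (I v).card := by
    have := hH v
    rw [Finset.card_sdiff_of_subset (hsub v), card_incidenceFinset_eq_degree,
      card_incidenceFinset_eq_degree, ← ndeg_eq_degree, ← ndeg_eq_degree]
    omega
  have hdisj : (S : Set V).PairwiseDisjoint I := by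
    intro x hx y hy hxy
    rw [Function.onFun, Finset.disjoint_left]
    intro e hex hey
    simp only [I, Finset.mem_sdiff, mem_incidenceFinset] at hex hey
    obtain rfl : e = s(x, y) := (Sym2.mem_and_mem_iff hxy).mp ⟨hex.1.2, hey.1.2⟩
    simp only [S, Finset.coe_filter, Finset.mem_univ, true_and, Set.mem_ofPred_eq] at hx hy
    rcases hG x y hex.1.1 with h | h <;> omega
  have hunion : S.biUnion I ⊆ G.edgeFinset \ H.edgeFinset := by
    intro e he
    obtain ⟨v, -, hv⟩ := Finset.mem_biUnion.mp he
    simp only [I, Finset.mem_sdiff, mem_incidenceFinset] at hv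
    simp only [Finset.mem_sdiff, mem_edgeFinset]
    exact ⟨hv.1.1, fun h => hv.2 ⟨h, hv.1.2⟩⟩
  calc ∑ v, (ndeg G v - 2) + numEdges H = ∑ v ∈ S, (ndeg G v - 2) + numEdges H := by
        rw [Finset.sum_filter_of_ne fun v _ h => by omega]
    _ ≤ ∑ v ∈ S, (I v).card + numEdges H := by gcongr with v; exact hI v
    _ = (S.biUnion I).card + numEdges H := by rw [Finset.card_biUnion hdisj]
    _ ≤ (G.edgeFinset \ H.edgeFinset).card + H.edgeFinset.card := by
        rw [numEdges_eq_card_edgeFinset]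
        gcongr
    _ = numEdges G := by
        rw [Finset.card_sdiff_add_card_eq_card (edgeFinset_mono hle), numEdges_eq_card_edgeFinset]

theorem exists_le_forall_ndeg_le_two [Fintype V] (G : SimpleGraph V) :
    ∃ H ≤ G, (∀ v, ndeg H v ≤ 2) ∧ numEdges G ≤ numEdges H + ∑ v, (ndeg G v - 2) := by
  classical
  choose S hSG hS using fun v => (G.neighborFinset v).exists_subset_card_eq
    (n := ndeg G v - 2) (by rw [card_neighborFinset_eq_degree, ← ndeg_eq_degree]; omega)
  let R := Finset.univ.biUnion fun v => (S v).image (s(v, ·))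
  refine ⟨G.deleteEdges R, deleteEdges_le _, fun v => ?_, ?_⟩
  · have hN : (G.deleteEdges R).neighborFinset v ⊆ G.neighborFinset v \ S v := by
      intro w hw
      simp only [mem_neighborFinset, deleteEdges_adj] at hw
      simp only [Finset.mem_sdiff, mem_neighborFinset]
      refine ⟨hw.1, fun hwS => hw.2 ?_⟩
      simp only [R, Finset.coe_biUnion, Finset.coe_image]
      exact Set.mem_biUnion (Finset.mem_coe.mpr (Finset.mem_univ v)) ⟨w, hwS, rfl⟩
    have := Finset.card_le_card hN
    rw [Finset.card_sdiff_of_subset (hSG v), hS, card_neighborFinset_eq_degree,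
      card_neighborFinset_eq_degree, ← ndeg_eq_degree, ← ndeg_eq_degree] at this
    omega
  · calc numEdges G ≤ numEdges (G.deleteEdges R) + R.card := by
          simp only [numEdges_eq_card_edgeFinset, edgeFinset_deleteEdges]
          exact Finset.card_le_card_sdiff_add_card
      _ ≤ numEdges (G.deleteEdges R) + ∑ v, (S v).card := by
          gcongr
          exact Finset.card_biUnion_le.trans (Finset.sum_le_sum fun v _ => Finset.card_image_le)
      _ = numEdges (G.deleteEdges R) + ∑ v, (ndeg G v - 2) := by simp only [hS]

theorem TwoSparse.numLeaves_add_numEdges_le [Fintype V] [Nontrivial V] (hsp : TwoSparse G)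
    (hG : G.Connected) (hle : H ≤ G) (hH : IsLinearForest H) :
    numLeaves G + numEdges G ≤ numPaths H + Fintype.card V := by
  have := sum_ndeg_sub_two_add_two_mul_card (one_le_ndeg_of_connected hG)
  have := numPaths_add_numEdges_of_isAcyclic hH.1
  have := hsp.sum_ndeg_sub_two_add_numEdges_le hle hH.2
  omega

end Trimming

section DeleteEdge

variable {G : SimpleGraph V} {u v : V}

theorem numEdges_deleteEdges_add_one [Finite V] (huv : G.Adj u v) :
    numEdges (G.deleteEdges {s(u, v)}) + 1 = numEdges G := by
  rw [numEdges, numEdges, edgeSet_deleteEdges]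
  exact Set.ncard_sdiff_singleton_add_one huv

theorem neighborSet_deleteEdges_of_ne {w : V} (hwu : w ≠ u) (hwv : w ≠ v) :
    (G.deleteEdges {s(u, v)}).neighborSet w = G.neighborSet w := by
  ext x
  simp only [mem_neighborSet, deleteEdges_adj, Set.mem_singleton_iff, and_iff_left_iff_imp]
  rintro - h
  rcases Sym2.eq_iff.mp h with ⟨rfl, -⟩ | ⟨rfl, -⟩ <;> contradiction

theorem neighborSet_deleteEdges_left :
    (G.deleteEdges {s(u, v)}).neighborSet u = G.neighborSet u \ {v} := by
  ext x
  simp only [mem_neighborSet, deleteEdges_adj, Set.mem_singleton_iff, Set.mem_sdiff,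
    Sym2.congr_right]

theorem ndeg_deleteEdges_left_add_one [Finite V] (huv : G.Adj u v) :
    ndeg (G.deleteEdges {s(u, v)}) u + 1 = ndeg G u := by
  rw [ndeg, ndeg, neighborSet_deleteEdges_left]
  exact Set.ncard_sdiff_singleton_add_one huv

theorem ndeg_deleteEdges_right_add_one [Finite V] (huv : G.Adj u v) :
    ndeg (G.deleteEdges {s(u, v)}) v + 1 = ndeg G v := by
  rw [Sym2.eq_swap]
  exact ndeg_deleteEdges_left_add_one huv.symm

theorem numLeaves_deleteEdges_le [Finite V] (huv : G.Adj u v) (hu : 2 < ndeg G u) :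
    numLeaves (G.deleteEdges {s(u, v)}) ≤ numLeaves G + 1 := by
  have hsub : {w | ndeg (G.deleteEdges {s(u, v)}) w = 1} ⊆ insert v {w | ndeg G w = 1} := by
    intro w hw
    by_cases hwv : w = v
    · exact Or.inl hwv
    by_cases hwu : w = u
    · subst hwu
      have := ndeg_deleteEdges_left_add_one huv
      simp only [Set.mem_ofPred_eq] at hw
      omega
    · exact Or.inr (by rwa [Set.mem_ofPred_eq, ndeg, ← neighborSet_deleteEdges_of_ne hwu hwv])
  exact (Set.ncard_le_ncard hsub (Set.toFinite _)).trans (Set.ncard_insert_le _ _)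

end DeleteEdge

section Cycles

variable {G : SimpleGraph V}

theorem isCycleGraph_of_isCycle [Finite V] (hG : G.Connected) {u : V} {c : G.Walk u u}
    (hc : c.IsCycle) (hlight : ∀ v ∈ c.support, ndeg G v ≤ 2) : IsCycleGraph G := by
  have hnbr v (hv : v ∈ c.support) : c.toSubgraph.neighborSet v = G.neighborSet v :=
    Set.eq_of_subset_of_ncard_le (c.toSubgraph.neighborSet_subset v)
      (by rw [hc.ncard_neighborSet_toSubgraph_eq_two hv]; exact hlight v hv) (Set.toFinite _)
  have hclosed {x y : V} (p : G.Walk x y) (hx : x ∈ c.support) : y ∈ c.support := by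
    induction p with
    | nil => exact hx
    | cons h _ ih =>
      exact ih (Walk.mem_support_of_adj_toSubgraph ((hnbr _ hx).superset h).symm)
  refine ⟨hG, fun v => ?_⟩
  obtain ⟨p⟩ := hG.preconnected u v
  have hv := hclosed p c.start_mem_support
  rw [ndeg, ← hnbr v hv, hc.ncard_neighborSet_toSubgraph_eq_two hv]

theorem exists_adj_not_isBridge_of_not_isAcyclic [Finite V] (hG : G.Connected)
    (hnc : ¬IsCycleGraph G) (hac : ¬G.IsAcyclic) :
    ∃ w x, G.Adj w x ∧ 2 < ndeg G w ∧ ¬G.IsBridge s(w, x) := by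
  obtain ⟨u, c, hc⟩ : ∃ u, ∃ c : G.Walk u u, c.IsCycle := by simpa [IsAcyclic] using hac
  obtain ⟨w, hw, hheavy⟩ : ∃ w ∈ c.support, 2 < ndeg G w := by
    by_contra! h
    exact hnc (isCycleGraph_of_isCycle hG hc h)
  obtain ⟨x, hx⟩ : (c.toSubgraph.neighborSet w).Nonempty :=
    Set.nonempty_of_ncard_ne_zero (by rw [hc.ncard_neighborSet_toSubgraph_eq_two hw]; norm_num)
  have hedge : s(w, x) ∈ c.edges := Walk.adj_toSubgraph_iff_mem_edges.mp hx
  exact ⟨w, x, c.adj_of_mem_edges hedge, hheavy, fun hb => hb.notMem_edges_of_isCycle hc hedge⟩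

end Cycles

theorem exists_isLinearForest_numPaths_add_card_le [Fintype V] [Nontrivial V]
    {G : SimpleGraph V} (hG : G.Connected) (hsp : TwoSparse G) (hnc : ¬IsCycleGraph G) :
    ∃ H ≤ G, IsLinearForest H ∧ numPaths H + Fintype.card V ≤ numLeaves G + numEdges G := by
  induction hm : numEdges G using Nat.strong_induction_on generalizing G with
  | _ m ih =>
  by_cases hac : G.IsAcyclic
  · obtain ⟨H, hle, hdeg, hcard⟩ := exists_le_forall_ndeg_le_two G
    have := sum_ndeg_sub_two_add_two_mul_card (one_le_ndeg_of_connected hG)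
    have := numPaths_add_numEdges_of_isAcyclic (hac.anti hle)
    exact ⟨H, hle, ⟨hac.anti hle, hdeg⟩, by omega⟩
  obtain ⟨w, x, hwx, hw, hbr⟩ := exists_adj_not_isBridge_of_not_isAcyclic hG hnc hac
  have hx : ndeg G x ≤ 2 := (hsp w x hwx).resolve_left (by omega)
  have hx' := ndeg_deleteEdges_right_add_one hwx
  have hnc' : ¬IsCycleGraph (G.deleteEdges {s(w, x)}) := fun h => by have := h.2 x; omega
  have hm' := numEdges_deleteEdges_add_one hwx
  have hleaves := numLeaves_deleteEdges_le hwx hw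
  obtain ⟨H, hle, hH, hcard⟩ := ih _ (by omega) (hG.connected_delete_edge_of_not_isBridge hbr)
    (hsp.anti (deleteEdges_le _)) hnc' rfl
  exact ⟨H, hle.trans (deleteEdges_le _), hH, by omega⟩

/-- **Theorem (Statement 19).** Let `G` be a connected 2-sparse graph with `m ≥ 1`
edges, `n` vertices, and `ℓ` leaves.  If `G` is not a cycle, then `P(G) = ℓ + m − n`. -/
theorem twoSparse_pathCoverNumber {V : Type*} [Fintype V] (G : SimpleGraph V)
    (hc : G.Connected) (hsp : TwoSparse G) (hm : 1 ≤ numEdges G)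
    (hnc : ¬ IsCycleGraph G) :
    (pathCoverNumber G : ℤ) = numLeaves G + numEdges G - Fintype.card V := by
  have := nontrivial_of_one_le_numEdges hm
  obtain ⟨H₀, hle₀, hH₀, hupper⟩ := exists_isLinearForest_numPaths_add_card_le hc hsp hnc
  have hP : pathCoverNumber G = numPaths H₀ := by
    refine IsLeast.csInf_eq ⟨⟨H₀, hle₀, hH₀, rfl⟩, ?_⟩
    rintro _ ⟨H, hle, hH, rfl⟩
    have := hsp.numLeaves_add_numEdges_le hc hle hH
    omega
  have := hsp.numLeaves_add_numEdges_le hc hle₀ hH₀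
  rw [hP]
  omega

end PaperPC
end
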